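/- Let h : D × D → D be defined by h(ξ,ζ) = ξ − ζ. Then h is continuous (with respect to the maximum of the two J1 metrics on the domain and the J1 metric on the range) at every (ξ,ζ) ∈ D × D such that (ξ(t) − ξ(t−))(ζ(t) − ζ(t−)) = 0 for all t ∈ (0,1]. Moreover, for any j,k ∈ ℤ_+ and any A ⊆ D bounded away from D_{<j,k}, the preimage h^{-1}(A) ⊆ D × D is bounded away from D_{<(j,k)} := ∪_{(l,m)∈I_{<j,k}} D_l × D_m. -/

import Mathlib

open MeasureTheory Filter Topology Set ProbabilityTheory
open scoped ENNReal NNReal Classical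

noncomputable section

/-- `A` is bounded away from `B` (for a distance function `ρ`). -/
def BddAway {S : Type*} (ρ : S → S → ℝ) (A B : Set S) : Prop :=
  ∃ ε > 0, ∀ a ∈ A, ∀ b ∈ B, ε ≤ ρ a b

/-- `M(S∖C)`-convergence of a sequence of measures: convergence of the integrals of every
bounded nonnegative continuous function vanishing on an `r`-neighborhood of `C` for some
`r > 0`. -/
def MConv {S : Type*} [TopologicalSpace S] [MeasurableSpace S] (ρ : S → S → ℝ) (C : Set S)
    (μ : ℕ → Measure S) (μlim : Measure S) : Prop :=
  ∀ f : S → ℝ, Continuous f → (∃ M, ∀ x, |f x| ≤ M) → (∀ x, 0 ≤ f x) →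
    (∃ r > 0, ∀ x, (∃ y ∈ C, ρ y x < r) → f x = 0) →
    Filter.Tendsto (fun n => ∫⁻ x, ENNReal.ofReal (f x) ∂(μ n)) Filter.atTop
      (nhds (∫⁻ x, ENNReal.ofReal (f x) ∂μlim))

/-- Membership in the class `M(S∖C)`: a Borel measure giving no mass to `C`, whose
restriction to the complement of each `r`-neighborhood of `C` is finite. -/
def MemM {S : Type*} [MeasurableSpace S] (ρ : S → S → ℝ) (C : Set S) (μ : Measure S) : Prop :=
  μ C = 0 ∧ ∀ r : ℝ, 0 < r → μ {x | ¬ ∃ y ∈ C, ρ y x < r} < ⊤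

/-- `Y n` is asymptotically equivalent to `X n` with respect to the sequence `eps`. -/
def AsympEquiv {Ω S : Type*} [MeasurableSpace Ω] (P : Measure Ω) (ρ : S → S → ℝ)
    (X Y : ℕ → Ω → S) (eps : ℕ → ℝ) : Prop :=
  ∀ δ : ℝ, 0 < δ →
    Filter.limsup (fun n => (ENNReal.ofReal (eps n))⁻¹ * P {ω | δ ≤ ρ (X n ω) (Y n ω)})
      Filter.atTop = 0

/-- A function `g` is regularly varying at infinity with index `ρ`. -/
def RegVarying (g : ℝ → ℝ) (ρ : ℝ) : Prop :=
  (∀ᶠ s in Filter.atTop, 0 < g s) ∧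
  ∀ c : ℝ, 0 < c →
    Filter.Tendsto (fun s => g (c * s) / g s) Filter.atTop (nhds (c ^ ρ))

/-- The Pareto-type measure `ν_γ` on `(0,∞)` with `ν_γ(x,∞) = x^{-γ}`. -/
def nuPareto (γ : ℝ) : Measure ℝ :=
  (volume.restrict (Set.Ioi (0 : ℝ))).withDensity fun s => ENNReal.ofReal (γ * s ^ (-γ - 1))

/-- The ordered cone `{x : x 0 ≥ x 1 ≥ … }`. -/
def ordCone (j : ℕ) : Set (Fin j → ℝ) := {x | ∀ i i' : Fin j, i ≤ i' → x i' ≤ x i}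

/-- `ν_γ^j`: the `j`-fold product of `ν_γ` restricted to the ordered cone. -/
def nuPow (γ : ℝ) (j : ℕ) : Measure (Fin j → ℝ) :=
  (Measure.pi fun _ => nuPareto γ).restrict (ordCone j)

/-- The joint law of `j` i.i.d. uniform random variables on `[0,1]`. -/
def unifPow (j : ℕ) : Measure (Fin j → ℝ) :=
  Measure.pi fun _ => volume.restrict (Set.Icc (0 : ℝ) 1)

/-- Right-continuity together with existence of left limits, for a function on `[0,1]`. -/
def IsCadlag (f : unitInterval → ℝ) : Prop :=
  (∀ t : unitInterval, Filter.Tendsto f (nhdsWithin t (Set.Ici t)) (nhds (f t))) ∧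
  (∀ t : unitInterval, ∃ L : ℝ, Filter.Tendsto f (nhdsWithin t (Set.Iio t)) (nhds L))

/-- The Skorokhod space `D = D([0,1], ℝ)` of real-valued càdlàg functions on `[0,1]`. -/
structure D where
  toFun : unitInterval → ℝ
  cadlag : IsCadlag toFun

/-- The set of increasing homeomorphisms of `[0,1]` onto itself
(continuous strictly increasing bijections of `[0,1]`). -/
def TimeChanges : Set (unitInterval → unitInterval) :=
  {l | Continuous l ∧ StrictMono l ∧ Function.Bijective l}

/-- The Skorokhod `J₁` distance on `D`:
`d(x,y) = inf_{λ ∈ Λ} (‖λ - id‖_∞ ⊔ ‖x ∘ λ - y‖_∞)`. -/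
def dJ1 (x y : D) : ℝ :=
  sInf ((fun l : unitInterval → unitInterval =>
      max (⨆ t : unitInterval, |(l t : ℝ) - (t : ℝ)|)
          (⨆ t : unitInterval, |x.toFun (l t) - y.toFun t|)) '' TimeChanges)

/-- The Skorokhod `J₁` topology on `D`: the topology generated by the open `dJ1`-balls. -/
instance : TopologicalSpace D :=
  TopologicalSpace.generateFrom {U : Set D | ∃ x ε, U = {y | dJ1 x y < ε}}

instance : MeasurableSpace D := borel D

/-- The step path `t ↦ ∑ i, x i · 1_{[u i, 1]}(t)`. -/
def stepPath {j : ℕ} (x u : Fin j → ℝ) : unitInterval → ℝ :=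
  fun t => ∑ i, if u i ≤ (t : ℝ) then x i else 0

lemma step_right (c u : ℝ) (t : unitInterval) :
    Filter.Tendsto (fun s : unitInterval => if u ≤ (s : ℝ) then c else 0)
      (nhdsWithin t (Set.Ici t)) (nhds (if u ≤ (t : ℝ) then c else 0)) := by
  by_cases h : u ≤ (t : ℝ)
  · rw [if_pos h]
    apply Filter.Tendsto.congr' _ tendsto_const_nhds
    filter_upwards [self_mem_nhdsWithin] with s hs
    rw [if_pos (le_trans h hs)]
  · rw [if_neg h]
    apply Filter.Tendsto.congr' _ tendsto_const_nhds
    have hV : IsOpen {s : unitInterval | (s : ℝ) < u} :=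
      continuous_subtype_val.isOpen_preimage _ isOpen_Iio
    have ht : t ∈ {s : unitInterval | (s : ℝ) < u} := lt_of_not_ge h
    filter_upwards [mem_nhdsWithin_of_mem_nhds (hV.mem_nhds ht)] with s hs
    rw [if_neg (not_le.mpr hs)]

lemma step_left (c u : ℝ) (t : unitInterval) :
    Filter.Tendsto (fun s : unitInterval => if u ≤ (s : ℝ) then c else 0)
      (nhdsWithin t (Set.Iio t)) (nhds (if u < (t : ℝ) then c else 0)) := by
  by_cases h : u < (t : ℝ)
  · rw [if_pos h]
    apply Filter.Tendsto.congr' _ tendsto_const_nhds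
    have hV : IsOpen {s : unitInterval | u < (s : ℝ)} :=
      continuous_subtype_val.isOpen_preimage _ isOpen_Ioi
    filter_upwards [mem_nhdsWithin_of_mem_nhds (hV.mem_nhds h)] with s hs
    rw [if_pos (le_of_lt hs)]
  · rw [if_neg h]
    apply Filter.Tendsto.congr' _ tendsto_const_nhds
    filter_upwards [self_mem_nhdsWithin] with s hs
    have : (s : ℝ) < (t : ℝ) := hs
    rw [if_neg (not_le.mpr (lt_of_lt_of_le this (not_lt.mp h)))]

lemma isCadlag_stepPath {j : ℕ} (x u : Fin j → ℝ) : IsCadlag (stepPath x u) := by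
  constructor
  · intro t
    have := tendsto_finset_sum (Finset.univ)
      (fun i (_ : i ∈ Finset.univ) => step_right (x i) (u i) t)
    exact this
  · intro t
    refine ⟨∑ i, if u i < (t : ℝ) then x i else 0, ?_⟩
    have := tendsto_finset_sum (Finset.univ)
      (fun i (_ : i ∈ Finset.univ) => step_left (x i) (u i) t)
    exact this

/-- The element of `D` determined by jump sizes `x` and jump times `u`. -/
def stepD {j : ℕ} (x u : Fin j → ℝ) : D := ⟨stepPath x u, isCadlag_stepPath x u⟩

/-- `D_j`: nondecreasing step functions vanishing at the origin with exactly `j` jumps. -/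
def Dstep (j : ℕ) : Set D :=
  {ξ | ∃ x u : Fin j → ℝ, (∀ i, 0 < x i) ∧ (∀ i, 0 < u i ∧ u i ≤ 1) ∧
    Function.Injective u ∧ ξ = stepD x u}

/-- `D_{<j} = ⋃_{0 ≤ l < j} D_l`. -/
def DstepLT (j : ℕ) : Set D := {ξ | ∃ l, l < j ∧ ξ ∈ Dstep l}

/-- `D_{≤j} = ⋃_{0 ≤ l ≤ j} D_l`. -/
def DstepLE (j : ℕ) : Set D := {ξ | ∃ l, l ≤ j ∧ ξ ∈ Dstep l}

/-- The two-sided step path `t ↦ ∑ i, x i 1_{[u i,1]}(t) - ∑ i, y i 1_{[v i,1]}(t)`. -/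
def stepPath2 {j k : ℕ} (x u : Fin j → ℝ) (y v : Fin k → ℝ) : unitInterval → ℝ :=
  fun t => stepPath x u t - stepPath y v t

lemma isCadlag_stepPath2 {j k : ℕ} (x u : Fin j → ℝ) (y v : Fin k → ℝ) :
    IsCadlag (stepPath2 x u y v) := by
  obtain ⟨h1, h2⟩ := isCadlag_stepPath x u
  obtain ⟨h1', h2'⟩ := isCadlag_stepPath y v
  constructor
  · intro t; exact (h1 t).sub (h1' t)
  · intro t
    obtain ⟨L, hL⟩ := h2 t
    obtain ⟨L', hL'⟩ := h2' t
    exact ⟨L - L', hL.sub hL'⟩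

/-- The element of `D` with upward jumps `x` at times `u` and downward jumps `y`
at times `v`. -/
def stepD2 {j k : ℕ} (x u : Fin j → ℝ) (y v : Fin k → ℝ) : D :=
  ⟨stepPath2 x u y v, isCadlag_stepPath2 x u y v⟩

/-- `D_{j,k}`: step functions vanishing at the origin with exactly `j` upward jumps and
`k` downward jumps. -/
def Dstep2 (j k : ℕ) : Set D :=
  {ξ | ∃ (x u : Fin j → ℝ) (y v : Fin k → ℝ),
    (∀ i, 0 < x i) ∧ (∀ i, 0 < y i) ∧
    (∀ i, 0 < u i ∧ u i ≤ 1) ∧ (∀ i, 0 < v i ∧ v i ≤ 1) ∧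
    Function.Injective u ∧ Function.Injective v ∧ (∀ i i', u i ≠ v i') ∧
    ξ = stepD2 x u y v}

/-- `D_{<j,k} = ⋃_{(l,m) ∈ I_{<j,k}} D_{l,m}` (for tail indices `α`, `β`). -/
def Dlt2 (α β : ℝ) (j k : ℕ) : Set D :=
  {ξ | ∃ l m : ℕ, (l, m) ≠ (j, k) ∧
    (α - 1) * l + (β - 1) * m ≤ (α - 1) * j + (β - 1) * k ∧ ξ ∈ Dstep2 l m}

/-- The limit measure `C_j = E[ν_α^j {x : ∑ i x i 1_{[U i,1]} ∈ ·}]` on `D`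
(equal to the Dirac mass at the zero path when `j = 0`). -/
def Cmeas (γ : ℝ) (j : ℕ) : Measure D :=
  Measure.map (fun p : (Fin j → ℝ) × (Fin j → ℝ) => stepD p.1 p.2)
    ((nuPow γ j).prod (unifPow j))

/-- The limit measure
`C_{j,k} = E[ν_α^j × ν_β^k {(x,y) : ∑ i x i 1_{[U i,1]} - ∑ i y i 1_{[V i,1]} ∈ ·}]` on `D`
(equal to the Dirac mass at the zero path when `(j,k) = (0,0)`). -/
def Cmeas2 (α β : ℝ) (j k : ℕ) : Measure D :=
  Measure.map (fun p : ((Fin j → ℝ) × (Fin j → ℝ)) × ((Fin k → ℝ) × (Fin k → ℝ)) =>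
      stepD2 p.1.1 p.1.2 p.2.1 p.2.2)
    (((nuPow α j).prod (unifPow j)).prod ((nuPow β k).prod (unifPow k)))

lemma isCadlag_const (c : ℝ) : IsCadlag (fun _ => c) :=
  ⟨fun _ => tendsto_const_nhds, fun _ => ⟨c, tendsto_const_nhds⟩⟩

/-- Build an element of `D` from a function (with a junk default for non-càdlàg input). -/
def mkD (f : unitInterval → ℝ) : D :=
  if h : IsCadlag f then ⟨f, h⟩ else ⟨fun _ => 0, isCadlag_const 0⟩

/-- `A_δ = {x : d(x, A) ≤ δ}` in `D`. -/
def thickenD (δ : ℝ) (A : Set D) : Set D := {x | ∀ ε > 0, ∃ a ∈ A, dJ1 a x < δ + ε}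

/-- Pointwise difference of two càdlàg paths. -/
def Dsub (ξ ζ : D) : D :=
  ⟨fun t => ξ.toFun t - ζ.toFun t, by
    obtain ⟨h1, h2⟩ := ξ.cadlag
    obtain ⟨h1', h2'⟩ := ζ.cadlag
    refine ⟨fun t => (h1 t).sub (h1' t), fun t => ?_⟩
    obtain ⟨L, hL⟩ := h2 t
    obtain ⟨L', hL'⟩ := h2' t
    exact ⟨L - L', hL.sub hL'⟩⟩

/-!
Continuity. If `ξ'`, `ζ'` are `J₁`-close to `ξ`, `ζ` via time changes `e₁`, `e₂`, perturb the
identity by small tents into one time change `e` that agrees with `e₁` at the finitely many large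
jumps of `ξ` and with `e₂` at those of `ζ`; this is possible because the two sets of jump times
are disjoint. Then no large jump of `ξ` separates `e t` from `e₁ t`, so the càdlàg oscillation
bound makes `ξ ∘ e` close to `ξ ∘ e₁`, hence to `ξ'`; likewise for `ζ`, and `e` witnesses that
`ξ' - ζ'` is close to `ξ - ζ`.

Bounded away. If `(ξ, ζ)` is within `c` of `(η, η') ∈ D_l × D_m`, then `ξ - ζ` is within `2c` of
`η - η' ∘ μ` for a time change `μ`; merging coincident jumps puts this path in some `D_{l',m'}`
with `l' ≤ l`, `m' ≤ m`, and since `α, β > 1` the index `(l', m')` stays in `I_{<j,k}`.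
-/

open scoped unitInterval

lemma coe_mem_timeChanges (e : I ≃o I) : ⇑e ∈ TimeChanges :=
  ⟨e.continuous, e.strictMono, e.bijective⟩

lemma exists_orderIso_of_mem_timeChanges {l : I → I} (hl : l ∈ TimeChanges) :
    ∃ e : I ≃o I, ⇑e = l :=
  ⟨StrictMono.orderIsoOfSurjective l hl.2.1 hl.2.2.2, StrictMono.coe_orderIsoOfSurjective ..⟩

lemma abs_symm_sub_lt {e : I ≃o I} {c : ℝ} (he : ∀ t, |(e t : ℝ) - t| < c) (t : I) :
    |(e.symm t : ℝ) - t| < c := by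
  simpa [abs_sub_comm] using he (e.symm t)

lemma exists_orderIso_of_strictMono {φ : ℝ → ℝ} (hc : Continuous φ) (hm : StrictMono φ)
    (h0 : φ 0 = 0) (h1 : φ 1 = 1) : ∃ e : I ≃o I, ∀ t, (e t : ℝ) = φ t := by
  let f : I → I := fun t => ⟨φ t, h0 ▸ hm.monotone t.2.1, h1 ▸ hm.monotone t.2.2⟩
  have hf : StrictMono f := fun s t hst => hm hst
  have hsurj : Function.Surjective f := by
    intro y
    obtain ⟨x, hx, hxy⟩ := intermediate_value_Icc zero_le_one hc.continuousOn
      (show (y : ℝ) ∈ Set.Icc (φ 0) (φ 1) by rw [h0, h1]; exact y.2)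
    exact ⟨⟨x, hx⟩, Subtype.ext hxy⟩
  exact ⟨StrictMono.orderIsoOfSurjective f hf hsurj, fun t => rfl⟩

def jump (f : I → ℝ) (t : I) : ℝ := f t - Function.leftLim f t

lemma jump_zero (f : I → ℝ) : jump f 0 = 0 := by
  simp [jump, leftLim_eq_of_eq_bot f (show 𝓝[<] (0 : I) = ⊥ by simp)]

namespace IsCadlag

variable {f : I → ℝ}

lemma tendsto_leftLim (hf : IsCadlag f) (p : I) :
    Tendsto f (𝓝[<] p) (𝓝 (Function.leftLim f p)) := by
  by_cases h : (𝓝[<] p).NeBot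
  · obtain ⟨L, hL⟩ := hf.2 p
    rwa [leftLim_eq_of_tendsto hL]
  · rw [not_neBot] at h
    simp [h]

lemma abs_jump_le (hf : IsCadlag f) {q : I} {η : ℝ} (hη : 0 ≤ η)
    (h : ∀ᶠ s in 𝓝[<] q, |f q - f s| ≤ η) : |jump f q| ≤ η := by
  by_cases hq : (𝓝[<] q).NeBot
  · exact le_of_tendsto ((tendsto_const_nhds.sub (hf.tendsto_leftLim q)).abs) h
  · simpa [jump, leftLim_eq_of_eq_bot f (not_neBot.mp hq)] using hη

/-- Near `p`, a càdlàg path stays close to `f p` on the right and to `f (p-)` on the left. -/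
lemma exists_ball_abs_sub_le (hf : IsCadlag f) (p : I) {η : ℝ} (hη : 0 < η) :
    ∃ δ > 0, ∀ s t : I, dist s p < δ → dist t p < δ →
      |f s - f t| ≤ 2 * η + if (p ≤ s ↔ p ≤ t) then 0 else |jump f p| := by
  obtain ⟨δ₁, hδ₁, hright⟩ := Metric.tendsto_nhdsWithin_nhds.mp (hf.1 p) η hη
  obtain ⟨δ₂, hδ₂, hleft⟩ := Metric.tendsto_nhdsWithin_nhds.mp (hf.tendsto_leftLim p) η hη
  let c : I → ℝ := fun u => if p ≤ u then f p else Function.leftLim f p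
  have hc : ∀ u, dist u p < min δ₁ δ₂ → |f u - c u| ≤ η := by
    intro u hu
    simp only [c]
    split_ifs with hpu
    · exact (hright hpu (hu.trans_le (min_le_left _ _))).le
    · exact (hleft (not_le.mp hpu) (hu.trans_le (min_le_right _ _))).le
  have hcc : ∀ s t, |c s - c t| ≤ if (p ≤ s ↔ p ≤ t) then 0 else |jump f p| := by
    intro s t
    simp only [c, jump]
    split_ifs <;> simp_all [abs_sub_comm (Function.leftLim f p)]
  refine ⟨min δ₁ δ₂, lt_min hδ₁ hδ₂, fun s t hs ht => ?_⟩
  linarith [abs_sub_le (f s) (c s) (f t), abs_sub_le (c s) (c t) (f t), abs_sub_comm (c t) (f t),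
    hc s hs, hc t ht, hcc s t]

lemma exists_abs_le (hf : IsCadlag f) : ∃ M, ∀ t, |f t| ≤ M := by
  choose δ hδ hball using fun p => hf.exists_ball_abs_sub_le p one_pos
  obtain ⟨B, hB⟩ := isCompact_univ.elim_finite_subcover (fun p => Metric.ball p (δ p))
    (fun p => Metric.isOpen_ball) (fun t _ => mem_iUnion.mpr ⟨t, Metric.mem_ball_self (hδ t)⟩)
  refine ⟨∑ p ∈ B, (|f p| + 2 + |jump f p|), fun t => ?_⟩
  obtain ⟨p, hp, htp⟩ := mem_iUnion₂.mp (hB (mem_univ t))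
  have hft := hball p t p htp (Metric.mem_ball_self (hδ p))
  have hite : (if (p ≤ t ↔ p ≤ p) then 0 else |jump f p|) ≤ |jump f p| := by
    split_ifs <;> simp
  calc |f t| ≤ |f p| + 2 + |jump f p| := by
        linarith [abs_sub_abs_le_abs_sub (f t) (f p)]
    _ ≤ _ := Finset.single_le_sum (f := fun p => |f p| + 2 + |jump f p|)
        (fun p _ => by positivity) hp

lemma finite_setOf_lt_abs_jump (hf : IsCadlag f) {ε : ℝ} (hε : 0 < ε) :
    {q | ε < |jump f q|}.Finite := by
  choose δ hδ hball using fun p => hf.exists_ball_abs_sub_le p (half_pos hε)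
  obtain ⟨B, hB⟩ := isCompact_univ.elim_finite_subcover (fun p => Metric.ball p (δ p))
    (fun p => Metric.isOpen_ball) (fun t _ => mem_iUnion.mpr ⟨t, Metric.mem_ball_self (hδ t)⟩)
  refine B.finite_toSet.subset fun q hq => ?_
  obtain ⟨p, hp, hqp⟩ := mem_iUnion₂.mp (hB (mem_univ q))
  by_contra hqB
  have hpq : p ≠ q := fun h => hqB (h ▸ hp)
  have hside : ∀ᶠ s in 𝓝[<] q, (p ≤ s ↔ p ≤ q) := by
    rcases hpq.lt_or_gt with h | h
    · filter_upwards [mem_nhdsWithin_of_mem_nhds (Ioi_mem_nhds h)] with s hs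
      exact iff_of_true (le_of_lt hs) h.le
    · filter_upwards [self_mem_nhdsWithin] with s hs
      exact iff_of_false (not_le.mpr (lt_trans hs h)) (not_le.mpr h)
  refine (not_lt.mpr (hf.abs_jump_le hε.le ?_)) hq
  filter_upwards [hside, mem_nhdsWithin_of_mem_nhds (Metric.isOpen_ball.mem_nhds hqp)]
    with s hs hsp
  have := hball p q s hqp hsp
  simp only [hs.symm, iff_self, if_true] at this
  linarith

lemma exists_abs_sub_le_of_forall_lt_abs_jump (hf : IsCadlag f) {ε : ℝ} (hε : 0 < ε) :
    ∃ δ > 0, ∀ s t : I, dist s t < δ → (∀ q, ε < |jump f q| → (q ≤ s ↔ q ≤ t)) →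
      |f s - f t| ≤ 2 * ε := by
  choose δ hδ hball using fun p => hf.exists_ball_abs_sub_le p (half_pos hε)
  obtain ⟨δL, hδL, hleb⟩ := lebesgue_number_lemma_of_metric isCompact_univ
    (fun p => Metric.isOpen_ball (x := p) (ε := δ p))
    (fun t _ => mem_iUnion.mpr ⟨t, Metric.mem_ball_self (hδ t)⟩)
  refine ⟨δL, hδL, fun s t hst hjump => ?_⟩
  obtain ⟨p, hp⟩ := hleb s (mem_univ s)
  have hite : (if (p ≤ s ↔ p ≤ t) then 0 else |jump f p|) ≤ ε := by
    split_ifs with h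
    · exact hε.le
    · exact not_lt.mp fun hbig => h (hjump p hbig)
  have := hball p s t (hp (Metric.mem_ball_self hδL)) (hp (by rwa [Metric.mem_ball, dist_comm]))
  linarith

end IsCadlag

lemma dJ1_le_of_orderIso {x y : D} (e : I ≃o I) {c : ℝ} (h₁ : ∀ t, |(e t : ℝ) - t| ≤ c)
    (h₂ : ∀ t, |x.toFun (e t) - y.toFun t| ≤ c) : dJ1 x y ≤ c := by
  refine (csInf_le ⟨0, ?_⟩ (mem_image_of_mem _ (coe_mem_timeChanges e))).trans
    (max_le (ciSup_le h₁) (ciSup_le h₂))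
  rintro _ ⟨l, -, rfl⟩
  exact le_max_of_le_left (Real.iSup_nonneg fun _ => abs_nonneg _)

lemma exists_orderIso_of_dJ1_lt {x y : D} {c : ℝ} (h : dJ1 x y < c) :
    ∃ e : I ≃o I, (∀ t, |(e t : ℝ) - t| < c) ∧ ∀ t, |x.toFun (e t) - y.toFun t| < c := by
  obtain ⟨_, ⟨l, hl, rfl⟩, hlc⟩ := exists_lt_of_csInf_lt
    ⟨_, mem_image_of_mem _ (coe_mem_timeChanges (OrderIso.refl I))⟩ h
  obtain ⟨e, rfl⟩ := exists_orderIso_of_mem_timeChanges hl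
  obtain ⟨Mx, hMx⟩ := x.cadlag.exists_abs_le
  obtain ⟨My, hMy⟩ := y.cadlag.exists_abs_le
  have hb₁ : BddAbove (range fun t : I => |(e t : ℝ) - t|) := ⟨1, by
    rintro _ ⟨t, rfl⟩
    exact abs_sub_le_iff.mpr ⟨by linarith [(e t).2.2, t.2.1], by linarith [(e t).2.1, t.2.2]⟩⟩
  have hb₂ : BddAbove (range fun t : I => |x.toFun (e t) - y.toFun t|) := ⟨Mx + My, by
    rintro _ ⟨t, rfl⟩
    linarith [abs_sub (x.toFun (e t)) (y.toFun t), hMx (e t), hMy t]⟩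
  exact ⟨e, fun t => ((le_ciSup hb₁ t).trans (le_max_left _ _)).trans_lt hlc,
    fun t => ((le_ciSup hb₂ t).trans (le_max_right _ _)).trans_lt hlc⟩

lemma dJ1_self (x : D) : dJ1 x x = 0 := by
  refine le_antisymm (dJ1_le_of_orderIso (OrderIso.refl I) (by simp) (by simp)) ?_
  exact le_csInf ⟨_, mem_image_of_mem _ (coe_mem_timeChanges (OrderIso.refl I))⟩ <| by
    rintro _ ⟨l, -, rfl⟩
    exact le_max_of_le_left (Real.iSup_nonneg fun _ => abs_nonneg _)

lemma dJ1_triangle (x y z : D) : dJ1 x z ≤ dJ1 x y + dJ1 y z := by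
  refine le_of_forall_pos_le_add fun ε hε => ?_
  obtain ⟨e₁, he₁, hx⟩ := exists_orderIso_of_dJ1_lt (lt_add_of_pos_right (dJ1 x y) (half_pos hε))
  obtain ⟨e₂, he₂, hy⟩ := exists_orderIso_of_dJ1_lt (lt_add_of_pos_right (dJ1 y z) (half_pos hε))
  refine (dJ1_le_of_orderIso (c := dJ1 x y + ε / 2 + (dJ1 y z + ε / 2)) (e₂.trans e₁)
    (fun t => ?_) (fun t => ?_)).trans_eq (by ring)
  · rw [OrderIso.trans_apply]
    linarith [abs_sub_le ((e₁ (e₂ t) : I) : ℝ) (e₂ t) t, he₁ (e₂ t), he₂ t]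
  · rw [OrderIso.trans_apply]
    linarith [abs_sub_le (x.toFun (e₁ (e₂ t))) (y.toFun (e₂ t)) (z.toFun t), hx (e₂ t), hy t]

lemma eventually_dJ1_lt (x : D) {ε : ℝ} (hε : 0 < ε) : ∀ᶠ y in 𝓝 x, dJ1 x y < ε := by
  have hopen : IsOpen {y | dJ1 x y < ε} := TopologicalSpace.isOpen_generateFrom_of_mem ⟨x, ε, rfl⟩
  exact hopen.mem_nhds (by simpa [dJ1_self])

lemma continuousAt_of_eventually_dJ1_lt {X : Type*} [TopologicalSpace X] {f : X → D} {p : X}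
    (h : ∀ ε > 0, ∀ᶠ q in 𝓝 p, dJ1 (f p) (f q) < ε) : ContinuousAt f p := by
  refine TopologicalSpace.tendsto_nhds_generateFrom_iff.mpr ?_
  rintro _ ⟨x, ε, rfl⟩ hx
  filter_upwards [h (ε - dJ1 x (f p)) (sub_pos.mpr hx)] with q hq
  exact (dJ1_triangle x (f p) (f q)).trans_lt (by linarith)

def tent (w a t : ℝ) : ℝ := max 0 (1 - |t - a| / w)

lemma tent_nonneg (w a t : ℝ) : 0 ≤ tent w a t := le_max_left _ _

lemma tent_le_one {w : ℝ} (hw : 0 < w) (a t : ℝ) : tent w a t ≤ 1 :=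
  max_le zero_le_one (sub_le_self _ (by positivity))

lemma tent_self {w : ℝ} (a : ℝ) : tent w a a = 1 := by simp [tent]

lemma tent_eq_zero {w a t : ℝ} (hw : 0 < w) (h : w ≤ |t - a|) : tent w a t = 0 :=
  max_eq_left (sub_nonpos.mpr ((one_le_div hw).mpr h))

lemma abs_tent_sub_tent_le {w : ℝ} (hw : 0 < w) (a s t : ℝ) :
    |tent w a t - tent w a s| ≤ |t - s| / w := by
  rw [tent, tent, max_comm 0, max_comm 0]
  refine (abs_max_sub_max_le_abs _ _ _).trans ?_
  rw [sub_sub_sub_cancel_left, ← sub_div, abs_div, abs_of_pos hw]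
  refine div_le_div_of_nonneg_right ?_ hw.le
  have := abs_abs_sub_abs_le_abs_sub (s - a) (t - a)
  rwa [sub_sub_sub_cancel_right, abs_sub_comm s t] at this

lemma continuous_tent (w a : ℝ) : Continuous (tent w a) := by
  unfold tent; fun_prop

lemma strictMono_add_of_abs_sub_le {ψ : ℝ → ℝ} {K : ℝ} (hK : K < 1)
    (hψ : ∀ s t, |ψ t - ψ s| ≤ K * |t - s|) : StrictMono fun t => t + ψ t := by
  intro s t hst
  have h := hψ s t
  rw [abs_of_pos (sub_pos.mpr hst)] at h
  nlinarith [neg_abs_le (ψ t - ψ s)]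

/-- Adding to the identity tents of heights `q - g q` centred at the separated points `g q`
moves each `g q` to `q`; the total height is below `w`, so the perturbation has Lipschitz
constant below `1` and the map stays increasing. -/
theorem exists_orderIso_apply_eq_of_separated {T : Finset I} {g : I → I} {w : ℝ} (hw : 0 < w)
    (hsep : ∀ p ∈ T, ∀ q ∈ T, p ≠ q → w ≤ |(g p : ℝ) - g q|)
    (hg : ∀ q ∈ T, w ≤ (g q : ℝ) ∧ (g q : ℝ) ≤ 1 - w)
    (hsmall : ∑ q ∈ T, |(q : ℝ) - g q| < w) :
    ∃ e : I ≃o I, (∀ q ∈ T, e (g q) = q) ∧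
      ∀ t, |(e t : ℝ) - t| ≤ ∑ q ∈ T, |(q : ℝ) - g q| := by
  let φ : ℝ → ℝ := fun t => t + ∑ q ∈ T, ((q : ℝ) - g q) * tent w (g q) t
  have hvanish : ∀ t, (∀ q ∈ T, w ≤ |t - (g q : ℝ)|) → φ t = t := fun t ht => by
    rw [add_eq_left]
    exact Finset.sum_eq_zero fun q hq => by rw [tent_eq_zero hw (ht q hq), mul_zero]
  have hcont : Continuous φ := continuous_id.add <|
    continuous_finset_sum _ fun q _ => continuous_const.mul (continuous_tent _ _)
  have hpert : ∀ s t, |(φ t - t) - (φ s - s)| ≤ (∑ q ∈ T, |(q : ℝ) - g q|) / w * |t - s| :=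
      fun s t => by
    simp only [φ, add_sub_cancel_left, ← Finset.sum_sub_distrib, ← mul_sub]
    rw [Finset.sum_div, Finset.sum_mul]
    refine (Finset.abs_sum_le_sum_abs _ _).trans (Finset.sum_le_sum fun q _ => ?_)
    rw [abs_mul, div_mul_comm, mul_comm (|t - s| / w)]
    exact mul_le_mul_of_nonneg_left (abs_tent_sub_tent_le hw _ _ _) (abs_nonneg _)
  have hmono : StrictMono φ := by
    simpa using strictMono_add_of_abs_sub_le ((div_lt_one hw).mpr hsmall) hpert
  have h0 : φ 0 = 0 := hvanish 0 fun q hq => by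
    rw [zero_sub, abs_neg, abs_of_nonneg (g q).2.1]; exact (hg q hq).1
  have h1 : φ 1 = 1 := hvanish 1 fun q hq => by
    rw [abs_of_nonneg (sub_nonneg.mpr (g q).2.2)]; linarith [(hg q hq).2]
  obtain ⟨e, he⟩ := exists_orderIso_of_strictMono hcont hmono h0 h1
  refine ⟨e, fun q hq => Subtype.ext ?_, fun t => ?_⟩
  · rw [he, show φ (g q) = g q + ((q : ℝ) - g q) * tent w (g q) (g q) from
      congrArg _ (Finset.sum_eq_single q (fun p hp hpq => by
        rw [tent_eq_zero hw (by rw [abs_sub_comm]; exact hsep p hp q hq hpq), mul_zero])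
        (fun h => absurd hq h)), tent_self]
    ring
  · rw [he, add_sub_cancel_left]
    refine (Finset.abs_sum_le_sum_abs _ _).trans (Finset.sum_le_sum fun q _ => ?_)
    rw [abs_mul, abs_of_nonneg (tent_nonneg _ _ _)]
    exact mul_le_of_le_one_right (abs_nonneg _) (tent_le_one hw _ _)

lemma Set.Finite.exists_pos_le_dist {X : Type*} [MetricSpace X] {S : Set X} (hS : S.Finite) :
    ∃ r > 0, ∀ x ∈ S, ∀ y ∈ S, x ≠ y → r ≤ dist x y := by
  have : ∀ᶠ r in 𝓝[>] (0 : ℝ), ∀ x ∈ S, ∀ y ∈ S, x ≠ y → r ≤ dist x y := by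
    refine hS.eventually_all.mpr fun x _ => hS.eventually_all.mpr fun y _ => ?_
    by_cases hxy : x = y
    · simp [hxy]
    · filter_upwards [nhdsWithin_le_nhds (eventually_le_nhds (dist_pos.mpr hxy))] with r hr _
        using hr
  obtain ⟨r, hr, hpos⟩ := (this.and self_mem_nhdsWithin).exists
  exact ⟨r, hpos, hr⟩

@[simp] lemma unitInterval.orderIso_apply_zero (e : I ≃o I) : e 0 = 0 := e.map_bot

@[simp] lemma unitInterval.orderIso_apply_one (e : I ≃o I) : e 1 = 1 := e.map_top

lemma OrderIso.le_apply_iff_of_symm_eq {α β : Type*} [LE α] [LE β] {e e' : α ≃o β} {q : β}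
    (h : e.symm q = e'.symm q) (t : α) : q ≤ e t ↔ q ≤ e' t := by
  rw [← e.symm_apply_le, ← e'.symm_apply_le, h]

lemma exists_orderIso_symm_eqOn_of_near {T : Finset I} {g : I → I} {r δ : ℝ} (hr : 0 < r)
    (hsep : ∀ p ∈ T, ∀ q ∈ T, p ≠ q → r ≤ |(p : ℝ) - q|)
    (hT : ∀ q ∈ T, r ≤ (q : ℝ) ∧ (q : ℝ) ≤ 1 - r)
    (hδr : 4 * δ ≤ r) (hTδ : T.card * δ < r / 2) (hg : ∀ q ∈ T, |(g q : ℝ) - q| < δ) :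
    ∃ e : I ≃o I, EqOn e.symm g T ∧ ∀ t, |(e t : ℝ) - t| ≤ T.card * δ := by
  have hsum : ∑ q ∈ T, |(q : ℝ) - g q| ≤ T.card * δ := by
    simpa using Finset.sum_le_card_nsmul T _ δ fun q hq => by
      rw [abs_sub_comm]; exact (hg q hq).le
  have hsepg : ∀ p ∈ T, ∀ q ∈ T, p ≠ q → r / 2 ≤ |(g p : ℝ) - g q| := by
    intro p hp q hq hpq
    have hp' := abs_lt.mp (hg p hp)
    have hq' := abs_lt.mp (hg q hq)
    rcases le_abs'.mp (hsep p hp q hq hpq) with h | h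
    · exact le_abs'.mpr (Or.inl (by linarith))
    · exact le_abs'.mpr (Or.inr (by linarith))
  have hgT : ∀ q ∈ T, r / 2 ≤ (g q : ℝ) ∧ (g q : ℝ) ≤ 1 - r / 2 := fun q hq => by
    have := abs_lt.mp (hg q hq)
    constructor <;> linarith [hT q hq]
  obtain ⟨e, heg, he⟩ :=
    exists_orderIso_apply_eq_of_separated (half_pos hr) hsepg hgT (by linarith)
  exact ⟨e, fun q hq => e.symm_apply_eq.mpr (heg q hq).symm, fun t => (he t).trans hsum⟩

/-- With `g = e₁⁻¹` on `B₁` and `g = e₂⁻¹` on `B₂`, the points of the finite set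
`B₁ ∪ B₂ ∪ {0, 1}` are separated by some `r > 0`; for `δ` small the tent construction then
moves each `g q` back to `q`, while `0` and `1` are fixed by every time change. -/
theorem exists_orderIso_symm_eqOn {B₁ B₂ : Set I} (h₁ : B₁.Finite) (h₂ : B₂.Finite)
    (hdisj : Disjoint B₁ B₂) {κ : ℝ} (hκ : 0 < κ) :
    ∃ δ > 0, ∀ e₁ e₂ : I ≃o I, (∀ t, |(e₁ t : ℝ) - t| < δ) → (∀ t, |(e₂ t : ℝ) - t| < δ) →
      ∃ e : I ≃o I, (∀ t, |(e t : ℝ) - t| < κ) ∧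
        EqOn e.symm e₁.symm B₁ ∧ EqOn e.symm e₂.symm B₂ := by
  obtain ⟨r, hr, hsep⟩ := (((h₁.union h₂).insert 1).insert 0).exists_pos_le_dist
  set T := ((h₁.union h₂).diff (s := B₁ ∪ B₂) (t := {0, 1})).toFinset
  have hTmem : ∀ q ∈ T, q ∈ B₁ ∪ B₂ ∧ q ≠ 0 ∧ q ≠ 1 := fun q hq => by simpa [T] using hq
  have hT : ∀ q ∈ T, r ≤ (q : ℝ) ∧ (q : ℝ) ≤ 1 - r := fun q hq => by
    have h0 : r ≤ dist q 0 := hsep q (by simp [(hTmem q hq).1]) 0 (by simp) (hTmem q hq).2.1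
    have h1 : r ≤ dist 1 q := hsep 1 (by simp) q (by simp [(hTmem q hq).1]) (hTmem q hq).2.2.symm
    rw [show dist q 0 = |(q : ℝ) - 0| from rfl, sub_zero, abs_of_nonneg q.2.1] at h0
    rw [show dist 1 q = |1 - (q : ℝ)| from rfl, abs_of_nonneg (sub_nonneg.mpr q.2.2)] at h1
    exact ⟨h0, by linarith⟩
  set δ := min κ r / (4 * (T.card + 1))
  have hδ : 0 < δ := by positivity
  have hNδ : (T.card + 1) * δ = min κ r / 4 := by simp only [δ]; field_simp
  have hδr : 4 * δ ≤ r := by nlinarith [min_le_right κ r, T.card.cast_nonneg (α := ℝ)]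
  refine ⟨δ, hδ, fun e₁ e₂ he₁ he₂ => ?_⟩
  let g : I → I := fun q => if q ∈ B₁ then e₁.symm q else e₂.symm q
  have hg : ∀ q, |(g q : ℝ) - q| < δ := fun q => by
    simp only [g]
    split_ifs
    exacts [abs_symm_sub_lt he₁ q, abs_symm_sub_lt he₂ q]
  obtain ⟨e, heg, he⟩ := exists_orderIso_symm_eqOn_of_near hr
    (fun p hp q hq => hsep p (by simp [(hTmem p hp).1]) q (by simp [(hTmem q hq).1])) hT hδr
    (by linarith [min_le_right κ r]) fun q _ => hg q
  have hsymm : EqOn e.symm g (B₁ ∪ B₂) := fun q hq => by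
    by_cases hq01 : q = 0 ∨ q = 1
    · rcases hq01 with rfl | rfl <;> simp [g]
    · exact heg (by simp [T, hq, not_or.mp hq01])
  refine ⟨e, fun t => (he t).trans_lt (by linarith [min_le_left κ r]), fun q hq => ?_,
    fun q hq => ?_⟩
  · exact (hsymm (Or.inl hq)).trans (if_pos hq)
  · exact (hsymm (Or.inr hq)).trans (if_neg (hdisj.notMem_of_mem_right hq))

theorem exists_pos_dJ1_Dsub_le {ξ ζ : D} (hjump : ∀ t, jump ξ.toFun t * jump ζ.toFun t = 0)
    {ε : ℝ} (hε : 0 < ε) :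
    ∃ δ > 0, ∀ ξ' ζ' : D, dJ1 ξ ξ' < δ → dJ1 ζ ζ' < δ → dJ1 (Dsub ξ ζ) (Dsub ξ' ζ') ≤ ε := by
  set η := ε / 6 with hηε
  have hη : 0 < η := by positivity
  obtain ⟨δξ, hδξ, hoscξ⟩ := ξ.cadlag.exists_abs_sub_le_of_forall_lt_abs_jump hη
  obtain ⟨δζ, hδζ, hoscζ⟩ := ζ.cadlag.exists_abs_sub_le_of_forall_lt_abs_jump hη
  have hdisj : Disjoint {q | η < |jump ξ.toFun q|} {q | η < |jump ζ.toFun q|} := by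
    refine Set.disjoint_left.mpr fun q (hξq : η < _) (hζq : η < _) => ?_
    rcases mul_eq_zero.mp (hjump q) with h | h
    · rw [h, abs_zero] at hξq; linarith
    · rw [h, abs_zero] at hζq; linarith
  set κ := min η (min δξ δζ) / 2
  have hκ : 0 < κ := by positivity
  obtain ⟨δ₀, hδ₀, hmerge⟩ := exists_orderIso_symm_eqOn
    (ξ.cadlag.finite_setOf_lt_abs_jump hη) (ζ.cadlag.finite_setOf_lt_abs_jump hη) hdisj hκ
  refine ⟨min δ₀ κ, lt_min hδ₀ hκ, fun ξ' ζ' hξ' hζ' => ?_⟩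
  obtain ⟨e₁, he₁, hξe₁⟩ := exists_orderIso_of_dJ1_lt hξ'
  obtain ⟨e₂, he₂, hζe₂⟩ := exists_orderIso_of_dJ1_lt hζ'
  obtain ⟨e, he, h₁, h₂⟩ := hmerge e₁ e₂ (fun t => (he₁ t).trans_le (min_le_left _ _))
    (fun t => (he₂ t).trans_le (min_le_left _ _))
  have hκη : κ ≤ η / 2 := by simp only [κ]; linarith [min_le_left η (min δξ δζ)]
  have hκξ : κ ≤ δξ / 2 := by
    simp only [κ]; linarith [min_le_left δξ δζ, min_le_right η (min δξ δζ)]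
  have hκζ : κ ≤ δζ / 2 := by
    simp only [κ]; linarith [min_le_right δξ δζ, min_le_right η (min δξ δζ)]
  have hdist : ∀ (e' : I ≃o I), (∀ t, |(e' t : ℝ) - t| < min δ₀ κ) →
      ∀ t, dist (e t) (e' t) < 2 * κ := fun e' he' t => by
    have := abs_sub_le ((e t : I) : ℝ) t (e' t)
    rw [abs_sub_comm (t : ℝ)] at this
    exact (this.trans_lt (add_lt_add (he t) (he' t))).trans_le
      (by linarith [min_le_right δ₀ κ])
  have hξ : ∀ t, |ξ.toFun (e t) - ξ.toFun (e₁ t)| ≤ 2 * η := fun t =>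
    hoscξ _ _ ((hdist e₁ he₁ t).trans_le (by linarith))
      fun q hq => OrderIso.le_apply_iff_of_symm_eq (h₁ hq) t
  have hζ : ∀ t, |ζ.toFun (e t) - ζ.toFun (e₂ t)| ≤ 2 * η := fun t =>
    hoscζ _ _ ((hdist e₂ he₂ t).trans_le (by linarith))
      fun q hq => OrderIso.le_apply_iff_of_symm_eq (h₂ hq) t
  refine dJ1_le_of_orderIso e (fun t => by linarith [he t]) (fun t => ?_)
  have := abs_le.mp (hξ t); have := abs_le.mp (hζ t)
  have := abs_lt.mp (hξe₁ t); have := abs_lt.mp (hζe₂ t)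
  have := min_le_right δ₀ κ
  exact abs_le.mpr ⟨by simp only [Dsub]; linarith, by simp only [Dsub]; linarith⟩

theorem continuousAt_Dsub {ξ ζ : D} (hjump : ∀ t, jump ξ.toFun t * jump ζ.toFun t = 0) :
    ContinuousAt (fun p : D × D => Dsub p.1 p.2) (ξ, ζ) := by
  refine continuousAt_of_eventually_dJ1_lt fun ε hε => ?_
  obtain ⟨δ, hδ, h⟩ := exists_pos_dJ1_Dsub_le hjump (half_pos hε)
  filter_upwards [(eventually_dJ1_lt ξ hδ).prod_nhds (eventually_dJ1_lt ζ hδ)] with p hp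
  exact (h p.1 p.2 hp.1 hp.2).trans_lt (half_lt_self hε)

lemma stepPath_apply_orderIso {m : ℕ} (y : Fin m → ℝ) (v : Fin m → I) (e : I ≃o I) (t : I) :
    stepPath y (fun i => (v i : ℝ)) (e t) = stepPath y (fun i => (e.symm (v i) : ℝ)) t := by
  simp only [stepPath, Subtype.coe_le_coe, e.symm_apply_le]

lemma stepPath_eq_sum_fiberwise {n : ℕ} (z u : Fin n → ℝ) {T : Finset ℝ} (hu : ∀ i, u i ∈ T)
    (t : I) : stepPath z u t = ∑ s ∈ T, if s ≤ (t : ℝ) then ∑ i with u i = s, z i else 0 := by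
  rw [stepPath, ← Finset.sum_fiberwise_of_maps_to (fun i _ => hu i)]
  refine Finset.sum_congr rfl fun s _ => ?_
  split_ifs with hs
  · exact Finset.sum_congr rfl fun i hi => if_pos (by rw [(Finset.mem_filter.mp hi).2]; exact hs)
  · exact Finset.sum_eq_zero fun i hi => if_neg (by rw [(Finset.mem_filter.mp hi).2]; exact hs)

lemma stepPath_sub_stepPath_eq_sum {l m : ℕ} (x u : Fin l → ℝ) (y v : Fin m → ℝ) (t : I) :
    stepPath x u t - stepPath y v t =
      ∑ s ∈ Finset.univ.image u ∪ Finset.univ.image v,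
        if s ≤ (t : ℝ) then (∑ i with u i = s, x i) - ∑ i with v i = s, y i else 0 := by
  rw [stepPath_eq_sum_fiberwise x u (fun i => Finset.mem_union_left _
      (Finset.mem_image_of_mem u (Finset.mem_univ i))) t,
    stepPath_eq_sum_fiberwise y v (fun i => Finset.mem_union_right _
      (Finset.mem_image_of_mem v (Finset.mem_univ i))) t, ← Finset.sum_sub_distrib]
  refine Finset.sum_congr rfl fun s _ => ?_
  split_ifs <;> simp

lemma sum_ite_le_eq_sum_pos_sub_sum_neg (T : Finset ℝ) (g : ℝ → ℝ) (t : ℝ) :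
    ∑ s ∈ T, (if s ≤ t then g s else 0) =
      ∑ s ∈ T with 0 < g s, (if s ≤ t then g s else 0) -
        ∑ s ∈ T with g s < 0, (if s ≤ t then -g s else 0) := by
  rw [Finset.sum_filter, Finset.sum_filter, ← Finset.sum_sub_distrib]
  refine Finset.sum_congr rfl fun s _ => ?_
  split_ifs <;> linarith

lemma exists_stepPath_eq_sum (P : Finset ℝ) (g : ℝ → ℝ) :
    ∃ u : Fin P.card → ℝ, Function.Injective u ∧ (∀ i, u i ∈ P) ∧
      ∀ t : I, stepPath (fun i => g (u i)) u t = ∑ s ∈ P, if s ≤ (t : ℝ) then g s else 0 :=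
  ⟨fun i => P.equivFin.symm i, Subtype.coe_injective.comp P.equivFin.symm.injective,
    fun i => (P.equivFin.symm i).2, fun t =>
      (Equiv.sum_comp P.equivFin.symm (fun s : P => if (s : ℝ) ≤ t then g s else 0)).trans
        (Finset.sum_coe_sort P fun s => if s ≤ (t : ℝ) then g s else 0)⟩

/-- Jumps of the two paths at a common time merge into one net jump, which is dropped when it
vanishes. -/
lemma exists_mem_Dstep2_eq_stepPath_sub {l m : ℕ} {x u : Fin l → ℝ} {y v : Fin m → ℝ}
    (hx : ∀ i, 0 < x i) (hy : ∀ i, 0 < y i)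
    (hu : ∀ i, 0 < u i ∧ u i ≤ 1) (hv : ∀ i, 0 < v i ∧ v i ≤ 1) :
    ∃ l' ≤ l, ∃ m' ≤ m, ∃ χ ∈ Dstep2 l' m', ∀ t, χ.toFun t = stepPath x u t - stepPath y v t := by
  set T := Finset.univ.image u ∪ Finset.univ.image v
  set g : ℝ → ℝ := fun s => (∑ i with u i = s, x i) - ∑ i with v i = s, y i
  set P := T.filter (0 < g ·)
  set N := T.filter (g · < 0)
  have hT : ∀ s ∈ T, 0 < s ∧ s ≤ 1 := by
    simp only [T, Finset.mem_union, Finset.mem_image, Finset.mem_univ, true_and]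
    rintro s (⟨i, rfl⟩ | ⟨i, rfl⟩)
    exacts [hu i, hv i]
  have hPu : P ⊆ Finset.univ.image u := fun s hs => by
    have hgs : 0 < g s := (Finset.mem_filter.mp hs).2
    have hpos : 0 < ∑ i with u i = s, x i := by
      linarith [Finset.sum_nonneg fun i (_ : i ∈ Finset.univ.filter (v · = s)) => (hy i).le]
    obtain ⟨i, hi, -⟩ := Finset.exists_ne_zero_of_sum_ne_zero hpos.ne'
    exact Finset.mem_image.mpr ⟨i, Finset.mem_univ i, (Finset.mem_filter.mp hi).2⟩
  have hNv : N ⊆ Finset.univ.image v := fun s hs => by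
    have hgs : g s < 0 := (Finset.mem_filter.mp hs).2
    have hpos : 0 < ∑ i with v i = s, y i := by
      linarith [Finset.sum_nonneg fun i (_ : i ∈ Finset.univ.filter (u · = s)) => (hx i).le]
    obtain ⟨i, hi, -⟩ := Finset.exists_ne_zero_of_sum_ne_zero hpos.ne'
    exact Finset.mem_image.mpr ⟨i, Finset.mem_univ i, (Finset.mem_filter.mp hi).2⟩
  obtain ⟨u', hu'inj, hu'P, hu'⟩ := exists_stepPath_eq_sum P g
  obtain ⟨v', hv'inj, hv'N, hv'⟩ := exists_stepPath_eq_sum N (fun s => -g s)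
  have hP : ∀ i, u' i ∈ T ∧ 0 < g (u' i) := fun i => Finset.mem_filter.mp (hu'P i)
  have hN : ∀ i, v' i ∈ T ∧ g (v' i) < 0 := fun i => Finset.mem_filter.mp (hv'N i)
  refine ⟨P.card, (Finset.card_le_card hPu).trans (Finset.card_image_le.trans (by simp)),
    N.card, (Finset.card_le_card hNv).trans (Finset.card_image_le.trans (by simp)),
    stepD2 (fun i => g (u' i)) u' (fun i => -g (v' i)) v',
    ⟨_, _, _, _, fun i => (hP i).2, fun i => neg_pos.mpr (hN i).2, fun i => hT _ (hP i).1,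
      fun i => hT _ (hN i).1, hu'inj, hv'inj,
      fun i i' h => (hP i).2.not_gt (h ▸ (hN i').2), rfl⟩, fun t => ?_⟩
  rw [stepPath_sub_stepPath_eq_sum, sum_ite_le_eq_sum_pos_sub_sum_neg, ← hu', ← hv']
  rfl

lemma exists_mem_Dstep2_dJ1_Dsub_le {ξ ζ η η' : D} {l m : ℕ} (hη : η ∈ Dstep l)
    (hη' : η' ∈ Dstep m) {c : ℝ} (hξ : dJ1 ξ η < c) (hζ : dJ1 ζ η' < c) :
    ∃ l' ≤ l, ∃ m' ≤ m, ∃ χ ∈ Dstep2 l' m', dJ1 (Dsub ξ ζ) χ ≤ 2 * c := by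
  obtain ⟨x, u, hx, hu, -, rfl⟩ := hη
  obtain ⟨y, v, hy, hv, -, rfl⟩ := hη'
  obtain ⟨e₁, he₁, hξe₁⟩ := exists_orderIso_of_dJ1_lt hξ
  obtain ⟨e₂, he₂, hζe₂⟩ := exists_orderIso_of_dJ1_lt hζ
  -- `ζ ∘ e₁` is close to `η' ∘ μ`, whose jumps sit at the times `μ⁻¹ (v i)`
  let μ := e₁.trans e₂.symm
  let vI : Fin m → I := fun i => ⟨v i, (hv i).1.le, (hv i).2⟩
  have hw : ∀ i, 0 < (μ.symm (vI i) : ℝ) ∧ (μ.symm (vI i) : ℝ) ≤ 1 := fun i =>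
    ⟨by simpa using μ.symm.strictMono (show (0 : I) < vI i from (hv i).1), (μ.symm (vI i)).2.2⟩
  obtain ⟨l', hl', m', hm', χ, hχ, hχeq⟩ := exists_mem_Dstep2_eq_stepPath_sub hx hy hu hw
  refine ⟨l', hl', m', hm', χ, hχ, dJ1_le_of_orderIso e₁ (fun t => ?_) (fun t => ?_)⟩
  · linarith [he₁ t, abs_nonneg (ξ.toFun (e₁ t) - (stepD x u).toFun t), hξe₁ t]
  · have hζμ : ζ.toFun (e₁ t) = ζ.toFun (e₂ (μ t)) := by simp [μ]
    have := abs_lt.mp (hξe₁ t)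
    have := abs_lt.mp (hζe₂ (μ t))
    rw [hχeq, ← stepPath_apply_orderIso y vI μ t]
    exact abs_le.mpr ⟨by simp only [Dsub, stepD] at *; linarith,
      by simp only [Dsub, stepD] at *; linarith⟩

/-- The index set `I_{<j,k}`. -/
def indexLT (α β : ℝ) (j k : ℕ) : Set (ℕ × ℕ) :=
  {p | p ≠ (j, k) ∧ (α - 1) * p.1 + (β - 1) * p.2 ≤ (α - 1) * j + (β - 1) * k}

lemma isLowerSet_indexLT {α β : ℝ} (hα : 1 < α) (hβ : 1 < β) (j k : ℕ) :
    IsLowerSet (indexLT α β j k) := by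
  rintro ⟨l, m⟩ ⟨l', m'⟩ ⟨hl, hm⟩ ⟨hne, hwt⟩
  have hl' : (α - 1) * l' ≤ (α - 1) * l := by gcongr
  have hm' : (β - 1) * m' ≤ (β - 1) * m := by gcongr
  refine ⟨fun heq => hne ?_, by simp only at hwt ⊢; linarith⟩
  obtain ⟨rfl, rfl⟩ := Prod.mk.inj heq
  simp only at hwt
  have hll : l ≤ l' := le_of_not_gt fun h => by
    have := mul_lt_mul_of_pos_left (Nat.cast_lt (α := ℝ).mpr h) (sub_pos.mpr hα)
    linarith
  have hmm : m ≤ m' := le_of_not_gt fun h => by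
    have := mul_lt_mul_of_pos_left (Nat.cast_lt (α := ℝ).mpr h) (sub_pos.mpr hβ)
    linarith
  exact Prod.ext (le_antisymm hll hl) (le_antisymm hmm hm)

theorem bddAway_preimage_Dsub {α β : ℝ} (hα : 1 < α) (hβ : 1 < β) {j k : ℕ} {A : Set D}
    (hA : BddAway dJ1 A (Dlt2 α β j k)) :
    BddAway (fun p q : D × D => max (dJ1 p.1 q.1) (dJ1 p.2 q.2)) {p | Dsub p.1 p.2 ∈ A}
      {p | ∃ l m : ℕ, (l, m) ∈ indexLT α β j k ∧ p.1 ∈ Dstep l ∧ p.2 ∈ Dstep m} := by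
  obtain ⟨ε, hε, hAway⟩ := hA
  refine ⟨ε / 3, by positivity, ?_⟩
  rintro ⟨ξ, ζ⟩ hξζ ⟨η, η'⟩ ⟨l, m, hlm, hη, hη'⟩
  by_contra! hclose
  obtain ⟨l', hl', m', hm', χ, hχ, hdist⟩ := exists_mem_Dstep2_dJ1_Dsub_le hη hη'
    ((le_max_left _ _).trans_lt hclose) ((le_max_right _ _).trans_lt hclose)
  obtain ⟨hne, hwt⟩ := isLowerSet_indexLT hα hβ j k (show (l', m') ≤ (l, m) from ⟨hl', hm'⟩) hlm
  linarith [hAway _ hξζ χ ⟨l', m', hne, hwt, hχ⟩]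

/-- The map `h(ξ,ζ) = ξ - ζ` is continuous at every pair of paths with
no common jump times, and the `h`-preimage of a set bounded away from `D_{<j,k}` is
bounded away from `D_{<(j,k)} = ⋃_{(l,m) ∈ I_{<j,k}} D_l × D_m`. -/
theorem subtraction_mapping_theorem (α β : ℝ) (hα : 1 < α) (hβ : 1 < β) :
    (∀ ξ ζ : D,
      (∀ t : unitInterval, t ≠ 0 →
        (ξ.toFun t - Function.leftLim ξ.toFun t) *
          (ζ.toFun t - Function.leftLim ζ.toFun t) = 0) →
      ContinuousAt (fun p : D × D => Dsub p.1 p.2) (ξ, ζ)) ∧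
    (∀ j k : ℕ, ∀ A : Set D, BddAway dJ1 A (Dlt2 α β j k) →
      BddAway (fun p q : D × D => max (dJ1 p.1 q.1) (dJ1 p.2 q.2))
        {p : D × D | Dsub p.1 p.2 ∈ A}
        {p : D × D | ∃ l m : ℕ, ((l, m) ≠ (j, k) ∧
          (α - 1) * l + (β - 1) * m ≤ (α - 1) * j + (β - 1) * k) ∧
          p.1 ∈ Dstep l ∧ p.2 ∈ Dstep m}) := by
  refine ⟨fun ξ ζ hjump => continuousAt_Dsub fun t => ?_,
    fun j k A hA => bddAway_preimage_Dsub hα hβ hA⟩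
  rcases eq_or_ne t 0 with rfl | ht
  · simp [jump_zero]
  · exact hjump t ht

end
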